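/- Let H be a separable infinite-dimensional complex Hilbert space and let T, S ∈ L(H) satisfy ST = TS. Then (T, ST) is not a universal commuting pair. In particular, (T, p(T)) is not a universal commuting pair for any complex polynomial p(z) = a₁z + … + a_n z^n with p(0) = 0, where p(T) = a₁T + … + a_nT^n. -/
import Mathlib


noncomputable section

/-- A commuting pair `(U₁, U₂)` is a *universal commuting pair* if for every commuting pair
`(S₁, S₂)` there are a nonzero `c ∈ ℂ`, a closed subspace `M` invariant under both `U₁` and
`U₂`, and a continuous linear isomorphism `V : H ≃ M` with `Uᵢ (V x) = c • V (Sᵢ x)` for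
all `x` and `i = 1, 2`. -/
def IsUniversalPair {H : Type*} [NormedAddCommGroup H] [InnerProductSpace ℂ H]
    (U₁ U₂ : H →L[ℂ] H) : Prop :=
  U₁.comp U₂ = U₂.comp U₁ ∧
  ∀ S₁ S₂ : H →L[ℂ] H, S₁.comp S₂ = S₂.comp S₁ →
    ∃ M : Submodule ℂ H, IsClosed (M : Set H) ∧
      (∀ x ∈ M, U₁ x ∈ M) ∧ (∀ x ∈ M, U₂ x ∈ M) ∧
      ∃ c : ℂ, c ≠ 0 ∧ ∃ V : H ≃L[ℂ] M,
        (∀ x : H, U₁ (V x : H) = c • ((V (S₁ x) : H))) ∧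
        (∀ x : H, U₂ (V x : H) = c • ((V (S₂ x) : H)))

/-- If `S` commutes with `T`, then `(T, S T)` is not a universal commuting pair; in
particular `(T, p(T))` is not a universal commuting pair for any polynomial `p` with
`p(0) = 0`. -/
theorem not_universalPair_of_commutant {H : Type*} [NormedAddCommGroup H]
    [InnerProductSpace ℂ H] [CompleteSpace H] [TopologicalSpace.SeparableSpace H]
    (hinf : ¬ FiniteDimensional ℂ H)
    (T S : H →L[ℂ] H) (h : S.comp T = T.comp S) :
    ¬ IsUniversalPair T (S.comp T) ∧
    ∀ p : Polynomial ℂ, p.coeff 0 = 0 →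
      ¬ IsUniversalPair T (Polynomial.aeval T p) := by
  have key : ∀ S' : H →L[ℂ] H, ¬ IsUniversalPair T (S'.comp T) := by
    rintro S' ⟨-, huniv⟩
    obtain ⟨M, -, -, -, c, hc, V, h1, h2⟩ := huniv 0 1 (by simp)
    obtain ⟨x, hx⟩ : ∃ x : H, x ≠ 0 := by
      by_contra hno
      push_neg at hno
      have : Subsingleton H := ⟨fun a b => by rw [hno a, hno b]⟩
      exact hinf inferInstance
    have hT : T ((V x : H)) = 0 := by simpa using h1 x
    have h2' : S' (T ((V x : H))) = c • ((V x : H)) := by simpa using h2 x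
    rw [hT, map_zero] at h2'
    have hV0 : (V x : H) = 0 := by
      rcases smul_eq_zero.mp h2'.symm with h | h
      · exact absurd h hc
      · exact h
    have : V x = 0 := by exact_mod_cast hV0
    exact hx (V.map_eq_zero_iff.mp this)
  refine ⟨key S, fun p hp0 => ?_⟩
  obtain ⟨q, hq⟩ : Polynomial.X ∣ p := Polynomial.X_dvd_iff.mpr hp0
  have : Polynomial.aeval T p = (Polynomial.aeval T q).comp T := by
    rw [hq, mul_comm, map_mul, Polynomial.aeval_X]
    rfl
  rw [this]
  exact key _

end
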